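/- arXiv:2604.05443 — 2 statements merged into one kernel-verified Lean document; each statement's English description precedes it below -/
import Mathlib

section
/- Let L be the Laplacian of a connected undirected weighted graph on N vertices with largest eigenvalue λ_N, let κ > λ_N/2, Y = (1/N)·1_N·1_N', and G = I_N − (1/κ)L. Then the spectral radius of G − Y is strictly less than 1. -/
open Matrix

/-- `L` is the Laplacian of the undirected weighted graph with adjacency matrix `A`. -/
def IsLaplacianOf {N : ℕ} (L A : Matrix (Fin N) (Fin N) ℝ) : Prop :=
  A.IsSymm ∧ (∀ i j, 0 ≤ A i j) ∧ (∀ i, A i i = 0) ∧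
    L = Matrix.diagonal (fun i => ∑ j, A i j) - A

/-- Connectedness of the weighted graph given by adjacency matrix `A`. -/
def GraphConnected {N : ℕ} (A : Matrix (Fin N) (Fin N) ℝ) : Prop :=
  ∀ i j : Fin N, Relation.ReflTransGen (fun a b => 0 < A a b) i j

/-- If L is the Laplacian of a connected weighted graph with largest
eigenvalue λN and κ > λN/2, then the spectral radius of G − Y is strictly less than 1,
i.e. (G − Y being symmetric) every eigenvalue μ of G − Y satisfies |μ| < 1. -/
theorem stmt4 {N : ℕ} (hN : 0 < N) (L A : Matrix (Fin N) (Fin N) ℝ)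
    (hL : IsLaplacianOf L A) (hconn : GraphConnected A)
    (lamN : ℝ)
    (hlamN : Module.End.HasEigenvalue (Matrix.toLin' L) lamN)
    (hmax : ∀ μ : ℝ, Module.End.HasEigenvalue (Matrix.toLin' L) μ → μ ≤ lamN)
    (κ : ℝ) (hκ : lamN / 2 < κ)
    (Y G : Matrix (Fin N) (Fin N) ℝ)
    (hY : Y = (N : ℝ)⁻¹ • Matrix.of (fun _ _ => (1 : ℝ)))
    (hG : G = 1 - κ⁻¹ • L) :
    ∀ μ : ℝ, Module.End.HasEigenvalue (Matrix.toLin' (G - Y)) μ → |μ| < 1 := by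
  obtain ⟨hAsym, hApos, hAdiag, hLdef⟩ := hL
  have hNne : (N : ℝ) ≠ 0 := Nat.cast_ne_zero.mpr hN.ne'
  -- quadratic form identity
  have quad : ∀ v : Fin N → ℝ,
      2 * (v ⬝ᵥ (L *ᵥ v)) = ∑ i, ∑ j, A i j * (v i - v j) ^ 2 := by
    intro v
    have h1 : v ⬝ᵥ ((Matrix.diagonal fun i => ∑ j, A i j) *ᵥ v)
        = ∑ i, ∑ j, A i j * v i * v i := by
      simp only [dotProduct, Matrix.mulVec_diagonal, Finset.sum_mul, Finset.mul_sum]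
      exact Finset.sum_congr rfl fun i _ => Finset.sum_congr rfl fun j _ => by ring
    have h2 : v ⬝ᵥ (A *ᵥ v) = ∑ i, ∑ j, A i j * v i * v j := by
      simp only [dotProduct, Matrix.mulVec, Finset.mul_sum]
      exact Finset.sum_congr rfl fun i _ => Finset.sum_congr rfl fun j _ => by ring
    have hswap : ∑ i, ∑ j, A i j * v j * v j = ∑ i, ∑ j, A i j * v i * v i := by
      rw [Finset.sum_comm]
      exact Finset.sum_congr rfl fun i _ => Finset.sum_congr rfl fun j _ => by
        rw [hAsym.apply]
    have hexp : ∑ i, ∑ j, A i j * (v i - v j) ^ 2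
        = (∑ i, ∑ j, A i j * v i * v i) - 2 * (∑ i, ∑ j, A i j * v i * v j)
          + ∑ i, ∑ j, A i j * v j * v j := by
      simp only [Finset.mul_sum, ← Finset.sum_add_distrib, ← Finset.sum_sub_distrib]
      exact Finset.sum_congr rfl fun i _ => Finset.sum_congr rfl fun j _ => by ring
    rw [hLdef, Matrix.sub_mulVec, dotProduct_sub, h1, h2, hexp, hswap]
    ring
  -- positive semidefiniteness
  have hpsd : ∀ v : Fin N → ℝ, 0 ≤ v ⬝ᵥ (L *ᵥ v) := by
    intro v
    have h : 0 ≤ ∑ i, ∑ j, A i j * (v i - v j) ^ 2 :=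
      Finset.sum_nonneg fun i _ => Finset.sum_nonneg fun j _ =>
        mul_nonneg (hApos i j) (sq_nonneg _)
    nlinarith [quad v]
  -- column sums of L vanish
  have hcol : ∀ j, ∑ i, L i j = 0 := by
    intro j
    rw [hLdef]
    simp only [Matrix.sub_apply, Matrix.diagonal_apply, Finset.sum_sub_distrib]
    rw [Finset.sum_ite_eq' Finset.univ j fun i => ∑ k, A i k]
    simp only [Finset.mem_univ, if_true]
    rw [sub_eq_zero]
    exact Finset.sum_congr rfl fun i _ => (hAsym.apply j i).symm
  have hsumLv : ∀ v : Fin N → ℝ, ∑ i, (L *ᵥ v) i = 0 := by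
    intro v
    simp only [Matrix.mulVec, dotProduct]
    rw [Finset.sum_comm]
    simp only [← Finset.sum_mul, hcol, zero_mul, Finset.sum_const_zero]
  -- positivity of the dot product of a nonzero vector with itself
  have dotpos : ∀ v : Fin N → ℝ, v ≠ 0 → 0 < v ⬝ᵥ v := by
    intro v hv
    obtain ⟨i, hi⟩ := Function.ne_iff.mp hv
    have hi' : v i ≠ 0 := by simpa using hi
    have h1 : 0 < v i * v i := mul_self_pos.mpr hi'
    have h2 : v i * v i ≤ ∑ j, v j * v j :=
      Finset.single_le_sum (fun j _ => mul_self_nonneg (v j)) (Finset.mem_univ i)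
    simpa [dotProduct] using lt_of_lt_of_le h1 h2
  -- λN ≥ 0, hence κ > 0
  have hlamNnn : 0 ≤ lamN := by
    obtain ⟨w, hw⟩ := hlamN.exists_hasEigenvector
    have hw1 : L *ᵥ w = lamN • w := by
      rw [← Matrix.toLin'_apply]; exact hw.apply_eq_smul
    have hww : 0 < w ⬝ᵥ w := dotpos w hw.2
    have h : w ⬝ᵥ (L *ᵥ w) = lamN * (w ⬝ᵥ w) := by
      rw [hw1, dotProduct_smul, smul_eq_mul]
    nlinarith [hpsd w]
  have hκpos : 0 < κ := by linarith
  have hκne : κ ≠ 0 := ne_of_gt hκpos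
  intro μ hμ
  obtain ⟨v, hv⟩ := hμ.exists_hasEigenvector
  have hvne : v ≠ 0 := hv.2
  have hMv : (G - Y) *ᵥ v = μ • v := by
    rw [← Matrix.toLin'_apply]; exact hv.apply_eq_smul
  set s := ∑ j, v j with hs
  have hYv : Y *ᵥ v = fun _ => (N : ℝ)⁻¹ * s := by
    rw [hY]; funext i
    simp [Matrix.mulVec, dotProduct, Finset.mul_sum, hs]
  have key : v - κ⁻¹ • (L *ᵥ v) - (fun _ => (N : ℝ)⁻¹ * s) = μ • v := by
    rw [← hMv, hG, Matrix.sub_mulVec, Matrix.sub_mulVec, Matrix.one_mulVec, hYv,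
      Matrix.smul_mulVec]
  have hsum : μ * s = 0 := by
    have h := congrArg (fun w : Fin N → ℝ => ∑ i, w i) key
    simp only [Pi.sub_apply, Pi.smul_apply, smul_eq_mul, Finset.sum_sub_distrib,
      ← Finset.mul_sum, hsumLv v, mul_zero, Finset.sum_const, Finset.card_univ,
      Fintype.card_fin, nsmul_eq_mul] at h
    have hNN : (N : ℝ) * ((N : ℝ)⁻¹ * s) = s := by field_simp
    rw [← hs] at h
    linarith [h, hNN]
  rcases eq_or_ne μ 0 with h0 | hμ0
  · rw [h0]; norm_num
  have hs0 : s = 0 := by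
    rcases mul_eq_zero.mp hsum with h | h
    · exact absurd h hμ0
    · exact h
  set lam := κ * (1 - μ) with hlamdef
  have hLv : L *ᵥ v = lam • v := by
    funext i
    have h := congrFun key i
    simp only [Pi.sub_apply, Pi.smul_apply, smul_eq_mul] at h ⊢
    rw [hs0, mul_zero] at h
    field_simp at h
    rw [hlamdef]
    linear_combination -h
  have heig : Module.End.HasEigenvalue (Matrix.toLin' L) lam :=
    Module.End.hasEigenvalue_of_hasEigenvector
      ⟨Module.End.mem_eigenspace_iff.mpr (by rw [Matrix.toLin'_apply, hLv]), hvne⟩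
  have hlamle : lam ≤ lamN := hmax lam heig
  have hvv : 0 < v ⬝ᵥ v := dotpos v hvne
  have hquadv : v ⬝ᵥ (L *ᵥ v) = lam * (v ⬝ᵥ v) := by
    rw [hLv, dotProduct_smul, smul_eq_mul]
  have hlamnn : 0 ≤ lam := by nlinarith [hpsd v]
  have hlampos : 0 < lam := by
    rcases hlamnn.lt_or_eq with h | h
    · exact h
    exfalso
    have hq0 : v ⬝ᵥ (L *ᵥ v) = 0 := by rw [hquadv, ← h]; ring
    have hsum0 : ∑ i, ∑ j, A i j * (v i - v j) ^ 2 = 0 := by rw [← quad v, hq0]; ring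
    have hterm : ∀ i j, A i j * (v i - v j) ^ 2 = 0 := by
      intro i j
      have h1 := (Finset.sum_eq_zero_iff_of_nonneg
        (fun i _ => Finset.sum_nonneg fun j _ =>
          mul_nonneg (hApos i j) (sq_nonneg _))).mp hsum0 i (Finset.mem_univ i)
      exact (Finset.sum_eq_zero_iff_of_nonneg
        (fun j _ => mul_nonneg (hApos i j) (sq_nonneg _))).mp h1 j (Finset.mem_univ j)
    have hedge : ∀ a b : Fin N, 0 < A a b → v a = v b := by
      intro a b hab
      have h2 : (v a - v b) ^ 2 = 0 := by
        rcases mul_eq_zero.mp (hterm a b) with h | h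
        · exact absurd h (ne_of_gt hab)
        · exact h
      have := sq_eq_zero_iff.mp h2
      linarith
    have hconst : ∀ i j : Fin N, v i = v j := by
      intro i j
      have hc := hconn i j
      induction hc with
      | refl => rfl
      | tail hab hbc ih => exact ih.trans (hedge _ _ hbc)
    obtain ⟨i0⟩ := Fin.pos_iff_nonempty.mp hN
    have hsconst : s = (N : ℝ) * v i0 := by
      rw [hs]
      calc ∑ j, v j = ∑ _j : Fin N, v i0 :=
            Finset.sum_congr rfl fun j _ => hconst j i0
        _ = (N : ℝ) * v i0 := by
            simp [Finset.sum_const, mul_comm, Finset.card_univ]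
    have hvi0 : v i0 = 0 := by
      rw [hs0] at hsconst
      rcases mul_eq_zero.mp hsconst.symm with h | h
      · exact absurd h hNne
      · exact h
    exact hvne (funext fun i => by rw [hconst i i0, hvi0]; rfl)
  have h1 : μ < 1 := by nlinarith
  have h2 : -1 < μ := by nlinarith
  exact abs_lt.mpr ⟨h2, h1⟩
end

section
/- Let L be the Laplacian of a connected undirected graph on N vertices, Y = (1/N)·1_N·1_N', G = I_N − (1/κ)L with κ > λ_N/2 where λ_N is the largest eigenvalue of L. Suppose sequences x_s ∈ ℝ^{Nm} satisfy x_s = (G ⊗ I_m) x_{s−1} + δ_s w_s, with δ_s > 0, δ_s → 0, and (w_s) bounded. Then the disagreement vector σ_s = ((I_N − Y) ⊗ I_m) x_s converges to 0. -/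
open Matrix
open scoped Kronecker

/-!
Put `F = G - Y` and `P = I - Y`. As `L` has zero row and column sums, `GY = YG = Y`, hence
`PG = FP` and the disagreement obeys `σ_s = (F ⊗ I) σ_{s-1} + δ_s (P ⊗ I) w_s`.
The symmetric matrix `F` vanishes on constant vectors and agrees with `G = I - L/κ` on their
orthogonal complement, where connectivity puts the eigenvalues `λ` of `L` in `(0, λ_N]`;
so every eigenvalue `1 - λ/κ` of `F`, and of `F ⊗ I`, lies in `(-1, 1)` because `κ > λ_N/2`.
Thus `F ⊗ I` contracts the Euclidean norm by some `r < 1`, and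
`‖σ_s‖ ≤ r ‖σ_{s-1}‖ + C |δ_s|` with `δ_s → 0` forces `σ_s → 0`.
-/

open Filter Topology

namespace Matrix

theorem IsHermitian.kronecker {R l n : Type*} [CommRing R] [StarRing R]
    {M : Matrix l l R} {M' : Matrix n n R} (hM : M.IsHermitian) (hM' : M'.IsHermitian) :
    (M ⊗ₖ M').IsHermitian := by
  rw [IsHermitian, conjTranspose_kronecker, hM.eq, hM'.eq]

theorem kronecker_one_mulVec_apply {R l n p : Type*} [CommSemiring R] [Fintype n] [Fintype p]
    [DecidableEq p] (M : Matrix l n R) (u : n × p → R) (i : l) (k : p) :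
    ((M ⊗ₖ (1 : Matrix p p R)) *ᵥ u) (i, k) = (M *ᵥ fun j => u (j, k)) i := by
  simp [mulVec, dotProduct, Fintype.sum_prod_type, one_apply, mul_comm]

theorem exists_mulVec_eq_smul_of_kronecker_one {R n p : Type*} [CommSemiring R] [Fintype n]
    [Fintype p] [DecidableEq p] {M : Matrix n n R} {u : n × p → R} {μ : R} (hu : u ≠ 0)
    (h : (M ⊗ₖ (1 : Matrix p p R)) *ᵥ u = μ • u) : ∃ v ≠ 0, M *ᵥ v = μ • v := by
  obtain ⟨⟨j, k⟩, hjk⟩ := Function.ne_iff.1 hu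
  refine ⟨fun j => u (j, k), Function.ne_iff.2 ⟨j, hjk⟩, funext fun i => ?_⟩
  simpa [kronecker_one_mulVec_apply] using congrFun h (i, k)

theorem hasEigenvalue_toLin'_of_mulVec_eq_smul {R n : Type*} [CommRing R] [Fintype n]
    [DecidableEq n] {M : Matrix n n R} {v : n → R} {μ : R} (hv : v ≠ 0) (h : M *ᵥ v = μ • v) :
    Module.End.HasEigenvalue (toLin' M) μ :=
  Module.End.hasEigenvalue_of_hasEigenvector
    ⟨Module.End.mem_eigenspace_iff.2 (by rwa [toLin'_apply]), hv⟩

theorem exists_mulVec_eq_smul_of_hasEigenvalue_toEuclideanLin {𝕜 n : Type*} [RCLike 𝕜]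
    [Fintype n] [DecidableEq n] {M : Matrix n n 𝕜} {μ : 𝕜}
    (h : Module.End.HasEigenvalue (toEuclideanLin M) μ) : ∃ v ≠ 0, M *ᵥ v = μ • v := by
  obtain ⟨v, hv, hv0⟩ := h.exists_hasEigenvector
  refine ⟨v.ofLp, fun h0 => hv0 (by simpa using h0), ?_⟩
  simpa [toLpLin_apply] using congrArg WithLp.ofLp (Module.End.mem_eigenspace_iff.1 hv)

end Matrix

namespace LinearMap.IsSymmetric

variable {𝕜 E : Type*} [RCLike 𝕜] [NormedAddCommGroup E] [InnerProductSpace 𝕜 E]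
  [FiniteDimensional 𝕜 E] {T : E →ₗ[𝕜] E}

theorem norm_apply_le_of_abs_eigenvalues_le (hT : T.IsSymmetric) {r : ℝ} (hr : 0 ≤ r)
    (heig : ∀ i, |hT.eigenvalues rfl i| ≤ r) (v : E) : ‖T v‖ ≤ r * ‖v‖ := by
  set b := hT.eigenvectorBasis rfl
  rw [← b.repr.norm_map, ← b.repr.norm_map v, EuclideanSpace.norm_eq, EuclideanSpace.norm_eq,
    ← Real.sqrt_sq hr, ← Real.sqrt_mul (sq_nonneg r), Finset.mul_sum]
  gcongr with i
  rw [hT.eigenvectorBasis_apply_self_apply, norm_mul, mul_pow, RCLike.norm_ofReal]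
  gcongr
  exact heig i

theorem exists_norm_apply_le_of_abs_lt_one (hT : T.IsSymmetric)
    (heig : ∀ μ : ℝ, Module.End.HasEigenvalue T μ → |μ| < 1) :
    ∃ r : ℝ, 0 ≤ r ∧ r < 1 ∧ ∀ v, ‖T v‖ ≤ r * ‖v‖ := by
  set r : NNReal := Finset.univ.sup fun i => ‖hT.eigenvalues rfl i‖₊
  refine ⟨r, r.2, ?_, hT.norm_apply_le_of_abs_eigenvalues_le r.2 fun i => ?_⟩
  · rw [← NNReal.coe_one, NNReal.coe_lt_coe, Finset.sup_lt_iff one_pos]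
    exact fun i _ => heig _ (hT.hasEigenvalue_eigenvalues rfl i)
  · exact Finset.le_sup (f := fun i => ‖hT.eigenvalues rfl i‖₊) (Finset.mem_univ i)

end LinearMap.IsSymmetric

theorem tendsto_zero_of_le_mul_add {a ε : ℕ → ℝ} {r : ℝ} (hr0 : 0 ≤ r) (hr1 : r < 1)
    (ha : ∀ s, 0 ≤ a s) (hrec : ∀ s, a (s + 1) ≤ r * a s + ε (s + 1))
    (hε : Tendsto ε atTop (𝓝 0)) : Tendsto a atTop (𝓝 0) := by
  rw [Metric.tendsto_atTop]
  intro η hη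
  obtain ⟨S, hS⟩ := Metric.tendsto_atTop.1 hε (η * (1 - r) / 2) (by nlinarith)
  -- once `ε ≤ η (1 - r) / 2`, the excess of `a` over `η / 2` shrinks geometrically
  have hgeom : ∀ n, a (S + n) ≤ r ^ n * a S + η / 2 := by
    intro n
    induction n with
    | zero => simp; linarith
    | succ n ih =>
      have hεn : ε (S + n + 1) < η * (1 - r) / 2 :=
        (le_abs_self _).trans_lt (by simpa using hS (S + n + 1) (by omega))
      calc a (S + (n + 1)) ≤ r * a (S + n) + ε (S + n + 1) := hrec (S + n)
        _ ≤ r * (r ^ n * a S + η / 2) + η * (1 - r) / 2 := by gcongr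
        _ = r ^ (n + 1) * a S + η / 2 := by ring
  have hpow : Tendsto (fun n => r ^ n * a S) atTop (𝓝 0) := by
    simpa using (tendsto_pow_atTop_nhds_zero_of_lt_one hr0 hr1).mul_const (a S)
  obtain ⟨n₀, hn₀⟩ := Metric.tendsto_atTop.1 hpow (η / 2) (by linarith)
  refine ⟨S + n₀, fun s hs => ?_⟩
  obtain ⟨n, rfl⟩ := Nat.exists_eq_add_of_le (le_of_add_le_left hs)
  have hsmall : r ^ n * a S < η / 2 := by
    have h := hn₀ n (by omega)
    rw [Real.dist_eq, sub_zero] at h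
    exact (le_abs_self _).trans_lt h
  rw [Real.dist_eq, sub_zero, abs_of_nonneg (ha _)]
  linarith [hgeom n]

theorem tendsto_zero_of_contraction_add_smul {E : Type*} [SeminormedAddCommGroup E]
    [NormedSpace ℝ E] (T : E → E) {r : ℝ} (hr0 : 0 ≤ r) (hr1 : r < 1)
    (hT : ∀ v, ‖T v‖ ≤ r * ‖v‖) {δ : ℕ → ℝ} (hδ : Tendsto δ atTop (𝓝 0))
    {u : ℕ → E} {C : ℝ} (hu : ∀ s, ‖u s‖ ≤ C) {y : ℕ → E}
    (hy : ∀ s, y (s + 1) = T (y s) + δ (s + 1) • u (s + 1)) :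
    Tendsto y atTop (𝓝 0) := by
  rw [tendsto_zero_iff_norm_tendsto_zero]
  refine tendsto_zero_of_le_mul_add (ε := fun s => |δ s| * C) hr0 hr1 (fun s => norm_nonneg _)
    (fun s => ?_) (by simpa using hδ.abs.mul_const C)
  calc ‖y (s + 1)‖ ≤ ‖T (y s)‖ + ‖δ (s + 1) • u (s + 1)‖ := by rw [hy]; exact norm_add_le _ _
    _ ≤ r * ‖y s‖ + |δ (s + 1)| * C := by
      rw [norm_smul, Real.norm_eq_abs]
      gcongr
      · exact hT _
      · exact hu _

namespace IsLaplacianOf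

variable {N : ℕ} {L A : Matrix (Fin N) (Fin N) ℝ}

theorem isSymm (hL : IsLaplacianOf L A) : L.IsSymm := by
  obtain ⟨hA, -, -, rfl⟩ := hL
  exact (isSymm_diagonal _).sub hA

theorem sum_apply_eq_zero (hL : IsLaplacianOf L A) (i : Fin N) : ∑ j, L i j = 0 := by
  obtain ⟨-, -, -, rfl⟩ := hL
  simp [diagonal_apply, Finset.sum_sub_distrib]

theorem mul_ones_eq_zero (hL : IsLaplacianOf L A) : L * of (fun _ _ => (1 : ℝ)) = 0 := by
  ext i j
  simp [mul_apply, hL.sum_apply_eq_zero i]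

theorem ones_mul_eq_zero (hL : IsLaplacianOf L A) : of (fun _ _ => (1 : ℝ)) * L = 0 := by
  ext i j
  simp [mul_apply, hL.isSymm.apply, hL.sum_apply_eq_zero j]

theorem hasEigenvalue_zero (hL : IsLaplacianOf L A) (hN : 0 < N) :
    Module.End.HasEigenvalue (toLin' L) 0 := by
  refine hasEigenvalue_toLin'_of_mulVec_eq_smul (v := fun _ => 1)
    (Function.ne_iff.2 ⟨⟨0, hN⟩, one_ne_zero⟩) ?_
  ext i
  simp [mulVec, dotProduct, hL.sum_apply_eq_zero i]

theorem dotProduct_mulVec_self (hL : IsLaplacianOf L A) (v : Fin N → ℝ) :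
    v ⬝ᵥ L *ᵥ v = (∑ i, ∑ j, A i j * (v i - v j) ^ 2) / 2 := by
  obtain ⟨hA, -, -, rfl⟩ := hL
  have hform : v ⬝ᵥ (diagonal (fun i => ∑ j, A i j) - A) *ᵥ v
      = ∑ i, ∑ j, A i j * (v i ^ 2 - v i * v j) := by
    rw [sub_mulVec, dotProduct_sub]
    simp only [dotProduct, mulVec_diagonal]
    simp only [mulVec, dotProduct, Finset.mul_sum, Finset.sum_mul, mul_sub,
      Finset.sum_sub_distrib]
    congr 1 <;> exact Finset.sum_congr rfl fun i _ => Finset.sum_congr rfl fun j _ => by ring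
  have hswap : ∑ i, ∑ j, A i j * (v j ^ 2 - v j * v i)
      = ∑ i, ∑ j, A i j * (v i ^ 2 - v i * v j) := by
    rw [Finset.sum_comm]
    simp_rw [hA.apply]
  have hsplit : ∑ i, ∑ j, A i j * (v i - v j) ^ 2
      = ∑ i, ∑ j, A i j * (v i ^ 2 - v i * v j) + ∑ i, ∑ j, A i j * (v j ^ 2 - v j * v i) := by
    simp only [← Finset.sum_add_distrib, ← mul_add]
    exact Finset.sum_congr rfl fun i _ => Finset.sum_congr rfl fun j _ => by ring
  rw [hform, hsplit, hswap]
  ring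

theorem dotProduct_mulVec_self_nonneg (hL : IsLaplacianOf L A) (v : Fin N → ℝ) :
    0 ≤ v ⬝ᵥ L *ᵥ v := by
  rw [hL.dotProduct_mulVec_self]
  exact div_nonneg (Finset.sum_nonneg fun i _ => Finset.sum_nonneg fun j _ =>
    mul_nonneg (hL.2.1 i j) (sq_nonneg _)) zero_le_two

theorem apply_eq_of_mulVec_eq_zero (hL : IsLaplacianOf L A) (hconn : GraphConnected A)
    {v : Fin N → ℝ} (hv : L *ᵥ v = 0) (i j : Fin N) : v i = v j := by
  have hnonneg : ∀ a b, 0 ≤ A a b * (v a - v b) ^ 2 :=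
    fun a b => mul_nonneg (hL.2.1 a b) (sq_nonneg _)
  have hzero : ∑ i, ∑ j, A i j * (v i - v j) ^ 2 = 0 := by
    have h := hL.dotProduct_mulVec_self v
    rw [hv, dotProduct_zero] at h
    linarith
  have hadj : ∀ a b, 0 < A a b → v a = v b := by
    intro a b hab
    have hrow := (Fintype.sum_eq_zero_iff_of_nonneg
      (fun a => Finset.sum_nonneg fun b _ => hnonneg a b)).1 hzero
    have hterm := (Fintype.sum_eq_zero_iff_of_nonneg (hnonneg a)).1 (congrFun hrow a)
    have := congrFun hterm b
    simp only [Pi.zero_apply, mul_eq_zero, hab.ne', false_or, pow_eq_zero_iff two_ne_zero,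
      sub_eq_zero] at this
    exact this
  induction hconn i j with
  | refl => rfl
  | tail _ hstep ih => exact ih.trans (hadj _ _ hstep)

theorem pos_of_mulVec_eq_smul (hL : IsLaplacianOf L A) (hconn : GraphConnected A)
    {v : Fin N → ℝ} {μ : ℝ} (hv : v ≠ 0) (hsum : ∑ i, v i = 0) (hμ : L *ᵥ v = μ • v) :
    0 < μ := by
  have hvv : 0 < v ⬝ᵥ v :=
    lt_of_le_of_ne (Finset.sum_nonneg fun i _ => mul_self_nonneg _)
      (Ne.symm (dotProduct_self_eq_zero.not.2 hv))
  have hnonneg : 0 ≤ μ := by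
    have h := hL.dotProduct_mulVec_self_nonneg v
    rw [hμ, dotProduct_smul, smul_eq_mul] at h
    exact nonneg_of_mul_nonneg_left h hvv
  refine hnonneg.lt_of_ne fun hzero => hv ?_
  obtain ⟨i₀, -⟩ := Function.ne_iff.1 hv
  have hconst := hL.apply_eq_of_mulVec_eq_zero hconn (v := v) (by rw [hμ, ← hzero, zero_smul])
  have hN : (0 : ℝ) < N := by exact_mod_cast i₀.pos
  simp_rw [hconst _ i₀, Finset.sum_const, Finset.card_univ, Fintype.card_fin, nsmul_eq_mul] at hsum
  ext i
  rw [hconst i i₀]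
  simpa [hN.ne'] using hsum

end IsLaplacianOf

section Consensus

variable {N : ℕ} {L A Y G : Matrix (Fin N) (Fin N) ℝ} {κ : ℝ}

theorem averaging_mul_self (hN : 0 < N) (hY : Y = (N : ℝ)⁻¹ • of fun _ _ => (1 : ℝ)) :
    Y * Y = Y := by
  subst hY
  ext i j
  simp [mul_apply, (Nat.cast_pos.2 hN).ne']

theorem averaging_mul_consensus (hL : IsLaplacianOf L A)
    (hY : Y = (N : ℝ)⁻¹ • of fun _ _ => (1 : ℝ)) (hG : G = 1 - κ⁻¹ • L) : Y * G = Y := by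
  rw [hG, mul_sub, mul_one, hY, Matrix.mul_smul, Matrix.smul_mul, hL.ones_mul_eq_zero,
    smul_zero, smul_zero, sub_zero]

theorem consensus_mul_averaging (hL : IsLaplacianOf L A)
    (hY : Y = (N : ℝ)⁻¹ • of fun _ _ => (1 : ℝ)) (hG : G = 1 - κ⁻¹ • L) : G * Y = Y := by
  rw [hG, sub_mul, one_mul, hY, Matrix.smul_mul, Matrix.mul_smul, hL.mul_ones_eq_zero,
    smul_zero, smul_zero, sub_zero]

theorem consensus_sub_averaging_abs_eigenvalue_lt_one (hN : 0 < N) (hL : IsLaplacianOf L A)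
    (hconn : GraphConnected A) {lamN : ℝ}
    (hmax : ∀ μ : ℝ, Module.End.HasEigenvalue (toLin' L) μ → μ ≤ lamN) (hκ : lamN / 2 < κ)
    (hY : Y = (N : ℝ)⁻¹ • of fun _ _ => (1 : ℝ)) (hG : G = 1 - κ⁻¹ • L)
    {v : Fin N → ℝ} {μ : ℝ} (hv : v ≠ 0) (hμ : (G - Y) *ᵥ v = μ • v) : |μ| < 1 := by
  rcases eq_or_ne μ 0 with rfl | hμ0
  · simp
  have hκ0 : 0 < κ := by linarith [hmax 0 (hL.hasEigenvalue_zero hN)]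
  have hYv : Y *ᵥ v = 0 := by
    have h := congrArg (Y *ᵥ ·) hμ
    simp only [mulVec_mulVec, mul_sub, averaging_mul_consensus hL hY hG, averaging_mul_self hN hY,
      sub_self, zero_mulVec, mulVec_smul] at h
    exact (smul_eq_zero.1 h.symm).resolve_left hμ0
  have hsum : ∑ i, v i = 0 := by
    have h := congrFun hYv ⟨0, hN⟩
    simp [hY, mulVec, dotProduct, ← Finset.mul_sum, (Nat.cast_pos.2 hN).ne'] at h
    exact h
  have hLv : L *ᵥ v = (κ * (1 - μ)) • v := by
    rw [sub_mulVec, hYv, sub_zero, hG, sub_mulVec, one_mulVec, smul_mulVec] at hμ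
    calc L *ᵥ v = κ • κ⁻¹ • L *ᵥ v := by rw [smul_smul, mul_inv_cancel₀ hκ0.ne', one_smul]
      _ = κ • (v - μ • v) := by rw [← hμ, sub_sub_cancel]
      _ = (κ * (1 - μ)) • v := by module
  have hpos := hL.pos_of_mulVec_eq_smul hconn hv hsum hLv
  have hle := hmax _ (hasEigenvalue_toLin'_of_mulVec_eq_smul hv hLv)
  rw [abs_lt]
  constructor <;> nlinarith

theorem isHermitian_consensus_sub_averaging (hL : IsLaplacianOf L A)
    (hY : Y = (N : ℝ)⁻¹ • of fun _ _ => (1 : ℝ)) (hG : G = 1 - κ⁻¹ • L) :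
    (G - Y).IsHermitian := by
  rw [isHermitian_iff_isSymm, hG, hY]
  exact (isSymm_one.sub (hL.isSymm.smul _)).sub ((IsSymm.ext fun _ _ => rfl).smul _)

theorem one_sub_averaging_mul_consensus (hN : 0 < N) (hL : IsLaplacianOf L A)
    (hY : Y = (N : ℝ)⁻¹ • of fun _ _ => (1 : ℝ)) (hG : G = 1 - κ⁻¹ • L) :
    (1 - Y) * G = (G - Y) * (1 - Y) := by
  simp only [sub_mul, mul_sub, one_mul, mul_one, averaging_mul_consensus hL hY hG,
    consensus_mul_averaging hL hY hG, averaging_mul_self hN hY, sub_self, sub_zero]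

end Consensus

theorem stmt7_general {N m : ℕ} (hN : 0 < N) (L A : Matrix (Fin N) (Fin N) ℝ)
    (hL : IsLaplacianOf L A) (hconn : GraphConnected A)
    (lamN : ℝ)
    (hmax : ∀ μ : ℝ, Module.End.HasEigenvalue (Matrix.toLin' L) μ → μ ≤ lamN)
    (κ : ℝ) (hκ : lamN / 2 < κ)
    (Y G : Matrix (Fin N) (Fin N) ℝ)
    (hY : Y = (N : ℝ)⁻¹ • Matrix.of (fun _ _ => (1 : ℝ)))
    (hG : G = 1 - κ⁻¹ • L)
    (δ : ℕ → ℝ)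
    (hδ0 : Filter.Tendsto δ Filter.atTop (nhds 0))
    (w : ℕ → (Fin N × Fin m → ℝ)) (B : ℝ) (hw : ∀ s : ℕ, ‖w s‖ ≤ B)
    (x : ℕ → (Fin N × Fin m → ℝ))
    (hx : ∀ s : ℕ, 1 ≤ s →
      x s = (G ⊗ₖ (1 : Matrix (Fin m) (Fin m) ℝ)) *ᵥ x (s - 1) + δ s • w s) :
    Filter.Tendsto (fun s => ((1 - Y) ⊗ₖ (1 : Matrix (Fin m) (Fin m) ℝ)) *ᵥ x s)
      Filter.atTop (nhds 0) := by
  obtain ⟨r, hr0, hr1, hcontr⟩ :=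
    (isSymmetric_toEuclideanLin_iff.2 ((isHermitian_consensus_sub_averaging hL hY hG).kronecker
      (isHermitian_one (n := Fin m)))).exists_norm_apply_le_of_abs_lt_one fun μ hμ => by
      obtain ⟨u, hu, hFu⟩ := exists_mulVec_eq_smul_of_hasEigenvalue_toEuclideanLin hμ
      obtain ⟨v, hv, hFv⟩ := exists_mulVec_eq_smul_of_kronecker_one hu hFu
      exact consensus_sub_averaging_abs_eigenvalue_lt_one hN hL hconn hmax hκ hY hG hv hFv
  let Φ : (Fin N × Fin m → ℝ) →L[ℝ] EuclideanSpace ℝ (Fin N × Fin m) :=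
    (toEuclideanCLM (𝕜 := ℝ) (n := Fin N × Fin m)
      ((1 - Y) ⊗ₖ (1 : Matrix (Fin m) (Fin m) ℝ))).comp
        (EuclideanSpace.equiv _ ℝ).symm.toContinuousLinearMap
  have hrec : ∀ s, Φ (x (s + 1)) = toEuclideanLin ((G - Y) ⊗ₖ (1 : Matrix (Fin m) (Fin m) ℝ))
      (Φ (x s)) + δ (s + 1) • Φ (w (s + 1)) := by
    intro s
    rw [hx (s + 1) s.succ_pos, Nat.add_sub_cancel, map_add, map_smul]
    congr 1
    simp [Φ, toLpLin_apply, mulVec_mulVec, ← mul_kronecker_mul,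
      one_sub_averaging_mul_consensus hN hL hY hG]
  have hσ := tendsto_zero_of_contraction_add_smul _ hr0 hr1 hcontr hδ0
    (fun s => Φ.le_opNorm_of_le (hw s)) (y := fun s => Φ (x s)) hrec
  simpa [Φ, Function.comp_def] using ((PiLp.continuous_ofLp 2 _).tendsto 0).comp hσ

/-- for the consensus iteration x_s = (G ⊗ I_m) x_{s−1} + δ_s w_s with
G = I − (1/κ)L, L the Laplacian of a connected graph, κ > λ_N/2, δ_s > 0, δ_s → 0, and
(w_s) bounded, the disagreement vector σ_s = ((I − Y) ⊗ I_m) x_s converges to 0. -/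
theorem stmt7 {N m : ℕ} (hN : 0 < N) (L A : Matrix (Fin N) (Fin N) ℝ)
    (hL : IsLaplacianOf L A) (hconn : GraphConnected A)
    (lamN : ℝ)
    (hlamN : Module.End.HasEigenvalue (Matrix.toLin' L) lamN)
    (hmax : ∀ μ : ℝ, Module.End.HasEigenvalue (Matrix.toLin' L) μ → μ ≤ lamN)
    (κ : ℝ) (hκ : lamN / 2 < κ)
    (Y G : Matrix (Fin N) (Fin N) ℝ)
    (hY : Y = (N : ℝ)⁻¹ • Matrix.of (fun _ _ => (1 : ℝ)))
    (hG : G = 1 - κ⁻¹ • L)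
    (δ : ℕ → ℝ) (hδpos : ∀ s : ℕ, 1 ≤ s → 0 < δ s)
    (hδ0 : Filter.Tendsto δ Filter.atTop (nhds 0))
    (w : ℕ → (Fin N × Fin m → ℝ)) (B : ℝ) (hw : ∀ s : ℕ, ‖w s‖ ≤ B)
    (x : ℕ → (Fin N × Fin m → ℝ))
    (hx : ∀ s : ℕ, 1 ≤ s →
      x s = (G ⊗ₖ (1 : Matrix (Fin m) (Fin m) ℝ)) *ᵥ x (s - 1) + δ s • w s) :
    Filter.Tendsto (fun s => ((1 - Y) ⊗ₖ (1 : Matrix (Fin m) (Fin m) ℝ)) *ᵥ x s)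
      Filter.atTop (nhds 0) :=
  stmt7_general hN L A hL hconn lamN hmax κ hκ Y G hY hG δ hδ0 w B hw x hx
end
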